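/- arXiv:math-ph/0602018 — 10 statements merged into one kernel-verified Lean document; each statement's English description precedes it below -/
import Mathlib

section
/- Let n ≥ 1 and let X be an invertible n×n real matrix. Then there exists a unique pair (B, R) where B is a symmetric positive-definite n×n real matrix and R is an orthogonal n×n real matrix (R * Rᵀ = 1) such that X = B * R. -/
open Matrix
open scoped MatrixOrder

lemma posDef_of_posSemidef_isUnit {n : ℕ} {A : Matrix (Fin n) (Fin n) ℝ}
    (hA : A.PosSemidef) (hU : IsUnit A) : A.PosDef := by
  refine posDef_iff_dotProduct_mulVec.mpr ⟨hA.1, fun x hx => ?_⟩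
  rcases lt_or_eq_of_le (hA.dotProduct_mulVec_nonneg x) with h | h
  · exact h
  · exfalso
    apply hx
    have h0 : star x ⬝ᵥ A *ᵥ x = 0 := h.symm
    have := (hA.dotProduct_mulVec_zero_iff x).mp h0
    have hdet : IsUnit A.det := (isUnit_iff_isUnit_det A).mp hU
    have h2 : A⁻¹ *ᵥ (A *ᵥ x) = 0 := by rw [this]; simp
    rwa [mulVec_mulVec, nonsing_inv_mul A hdet, one_mulVec] at h2

open Matrix in
/-- **Polar decomposition** of an invertible real matrix: there is a unique
pair `(B, R)` with `B` symmetric positive-definite and `R` orthogonal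
(`R * Rᵀ = 1`) such that `X = B * R`. -/
theorem polar_decomposition_real (n : ℕ) (hn : 1 ≤ n)
    (X : Matrix (Fin n) (Fin n) ℝ) (hX : IsUnit X) :
    ∃! BR : Matrix (Fin n) (Fin n) ℝ × Matrix (Fin n) (Fin n) ℝ,
      BR.1ᵀ = BR.1 ∧ BR.1.PosDef ∧ BR.2 * BR.2ᵀ = 1 ∧
      X = BR.1 * BR.2 := by
  have hXt : Xᴴ = Xᵀ := conjTranspose_eq_transpose_of_trivial X
  have hM : (X * Xᵀ).PosSemidef := by
    rw [← hXt]; exact posSemidef_self_mul_conjTranspose X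
  have hMU : IsUnit (X * Xᵀ) := hX.mul ((Matrix.isUnit_iff_isUnit_det _).mpr (by
    rw [det_transpose]; exact (Matrix.isUnit_iff_isUnit_det X).mp hX))
  set B := CFC.sqrt (X * Xᵀ) with hBdef
  have hBsd : B.PosSemidef := (CFC.sqrt_nonneg _).posSemidef
  have hB2 : B * B = X * Xᵀ := CFC.sqrt_mul_sqrt_self _ hM.nonneg
  have hBU : IsUnit B := by
    have : IsUnit (B * B) := hB2 ▸ hMU
    exact (isUnit_iff_isUnit_det B).mpr (by
      have := (isUnit_iff_isUnit_det (B * B)).mp this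
      rw [det_mul] at this
      exact (isUnit_of_mul_isUnit_left this))
  have hBpd : B.PosDef := posDef_of_posSemidef_isUnit hBsd hBU
  have hBsymm : Bᵀ = B := by rw [← conjTranspose_eq_transpose_of_trivial]; exact hBsd.1
  set R := B⁻¹ * X with hRdef
  have hBdet : IsUnit B.det := (isUnit_iff_isUnit_det B).mp hBU
  have hBinv : B * B⁻¹ = 1 := mul_nonsing_inv B hBdet
  have hBinv' : B⁻¹ * B = 1 := nonsing_inv_mul B hBdet
  have hBinvT : B⁻¹ᵀ = B⁻¹ := by rw [transpose_nonsing_inv, hBsymm]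
  refine ⟨(B, R), ⟨hBsymm, hBpd, ?_, ?_⟩, ?_⟩
  · show R * Rᵀ = 1
    rw [hRdef, transpose_mul, hBinvT, mul_assoc, ← mul_assoc X, ← hB2,
      mul_assoc, hBinv, mul_one, hBinv']
  · show X = B * R
    rw [hRdef, ← mul_assoc, hBinv, one_mul]
  · rintro ⟨B', R'⟩ ⟨h1, h2, h3, h4⟩
    have hB'2 : B' ^ 2 = X * Xᵀ := by
      rw [h4, pow_two, transpose_mul, mul_assoc, ← mul_assoc R', h3, one_mul, h1]
    have hB'sd : B'.PosSemidef := h2.posSemidef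
    have hB'eq : B' = B := ((CFC.sqrt_eq_iff _ _ hM.nonneg hB'sd.nonneg).mpr (by rw [← pow_two]; exact hB'2)).symm
    have hR'eq : R' = R := by
      rw [hRdef, h4, hB'eq, ← mul_assoc, hBinv', one_mul]
    simp [hB'eq, hR'eq]
end

section
/- Let p, q ≥ 0 with n = p + q ≥ 1, and let E be the diagonal n×n matrix whose first p diagonal entries are +1 and whose last q diagonal entries are −1. Suppose X is an n×n complex matrix with X * E * Xᴴ = E (i.e. X ∈ U(p,q)), and suppose X = B * R where B is positive-definite Hermitian and R is unitary (the polar decomposition of X). Then both polar factors lie in U(p,q): B * E * Bᴴ = E and R * E * Rᴴ = E. -/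
/-!
From `X E Xᴴ = E` one gets `Xᴴ E X = E`, hence `B² E B² = X (Xᴴ E X) Xᴴ = E` with `B² = X Xᴴ`.
Then `E B E` and `B⁻¹` are positive semidefinite square roots of `(B²)⁻¹ = E B² E`, so they
coincide by uniqueness of positive square roots, i.e. `B E B = E`. Cancelling `B` on both sides of
`B (R E Rᴴ) B = X E Xᴴ = E = B E B` gives `R E Rᴴ = E`.
-/

open Matrix
open scoped ComplexOrder

namespace Matrix

section Sign

variable {n R : Type*} [DecidableEq n] [Ring R] (s : n → Prop) [DecidablePred s]

lemma isHermitian_diagonal_sign [StarRing R] :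
    (diagonal fun i => if s i then (1 : R) else -1).IsHermitian := by
  refine isHermitian_diagonal_of_self_adjoint _ (funext fun i => ?_)
  simp only [Pi.star_apply]
  split_ifs <;> simp

lemma diagonal_sign_mul_self [Fintype n] :
    (diagonal fun i => if s i then (1 : R) else -1) *
      diagonal (fun i => if s i then (1 : R) else -1) = 1 := by
  rw [diagonal_mul_diagonal, ← diagonal_one]
  congr 1
  funext i
  split_ifs <;> simp

end Sign

variable {n 𝕜 : Type*} [Fintype n] [DecidableEq n] [RCLike 𝕜] {E : Matrix n n 𝕜}

/-- `E Xᴴ E` is the inverse of `X`. -/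
lemma conjTranspose_mul_mul_self_eq (hEE : E * E = 1)
    {X : Matrix n n 𝕜} (hX : X * E * Xᴴ = E) : Xᴴ * E * X = E := by
  have hinv : X * (E * Xᴴ * E) = 1 := by
    calc X * (E * Xᴴ * E) = X * E * Xᴴ * E := by simp only [Matrix.mul_assoc]
      _ = 1 := by rw [hX, hEE]
  calc Xᴴ * E * X = E * ((E * Xᴴ * E) * X) := by
        simp only [← Matrix.mul_assoc, hEE, Matrix.one_mul]
    _ = E := by rw [mul_eq_one_comm.mp hinv, Matrix.mul_one]

open scoped MatrixOrder in
lemma PosDef.mul_mul_self_eq_of_sq (hEH : E.IsHermitian) (hEE : E * E = 1)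
    {B : Matrix n n 𝕜} (hB : B.PosDef) (h : B * B * E * (B * B) = E) : B * E * B = E := by
  have hEBE : E * B * E = B⁻¹ := by
    have hsq_inv : (B * B) * (E * (B * B) * E) = 1 := by
      calc (B * B) * (E * (B * B) * E) = B * B * E * (B * B) * E := by
            simp only [Matrix.mul_assoc]
        _ = 1 := by rw [h, hEE]
    have hsq : (E * B * E) ^ 2 = B⁻¹ ^ 2 := by
      calc (E * B * E) ^ 2 = E * (B * B) * E := by
            simp only [sq, Matrix.mul_assoc, ← Matrix.mul_assoc E E, hEE, Matrix.one_mul]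
        _ = (B * B)⁻¹ := (inv_eq_right_inv hsq_inv).symm
        _ = B⁻¹ ^ 2 := by rw [mul_inv_rev, sq]
    have hpos : (E * B * E).PosSemidef := by
      simpa only [hEH.eq] using hB.posSemidef.conjTranspose_mul_mul_same E
    exact (CFC.sq_eq_sq_iff _ _ hpos.nonneg hB.inv.posSemidef.nonneg).mp hsq
  calc B * E * B = B * (E * B * E) * E := by
        simp only [Matrix.mul_assoc, hEE, Matrix.mul_one]
    _ = E := by
      rw [hEBE, mul_nonsing_inv _ ((isUnit_iff_isUnit_det B).mp hB.isUnit), Matrix.one_mul]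

end Matrix

open Matrix ComplexOrder in
theorem polar_factors_in_Upq_general (p q : ℕ)
    (E : Matrix (Fin (p + q)) (Fin (p + q)) ℂ)
    (hE : E = Matrix.diagonal (fun i : Fin (p + q) => if (i : ℕ) < p then (1 : ℂ) else -1))
    (X B R : Matrix (Fin (p + q)) (Fin (p + q)) ℂ)
    (hX : X * E * Xᴴ = E)
    (hB : B.IsHermitian ∧ B.PosDef)
    (hR : R * Rᴴ = 1)
    (hXBR : X = B * R) :
    B * E * Bᴴ = E ∧ R * E * Rᴴ = E := by
  obtain ⟨hBH, hBpd⟩ := hB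
  have hEH : E.IsHermitian := hE ▸ isHermitian_diagonal_sign _
  have hEE : E * E = 1 := hE ▸ diagonal_sign_mul_self _
  have hXX : X * Xᴴ = B * B := by
    rw [hXBR, conjTranspose_mul, hBH.eq, Matrix.mul_assoc, ← Matrix.mul_assoc R, hR,
      Matrix.one_mul]
  have hB2 : B * B * E * (B * B) = E := by
    calc B * B * E * (B * B) = X * (Xᴴ * E * X) * Xᴴ := by
          simp only [← hXX, Matrix.mul_assoc]
      _ = E := by rw [conjTranspose_mul_mul_self_eq hEE hX, hX]
  have hBEB : B * E * B = E := hBpd.mul_mul_self_eq_of_sq hEH hEE hB2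
  refine ⟨hBH.eq.symm ▸ hBEB, ?_⟩
  have hB : IsUnit B := hBpd.isUnit
  have hcancel : B * (R * E * Rᴴ) * B = B * E * B := by
    calc B * (R * E * Rᴴ) * B = X * E * Xᴴ := by
          simp only [hXBR, conjTranspose_mul, hBH.eq, Matrix.mul_assoc]
      _ = B * E * B := by rw [hX, hBEB]
  exact hB.mul_left_cancel (hB.mul_right_cancel hcancel)

open Matrix ComplexOrder in
/-- The polar factors of an element of `U(p,q)` again lie in `U(p,q)`. -/
theorem polar_factors_in_Upq (p q : ℕ) (hn : 1 ≤ p + q)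
    (E : Matrix (Fin (p + q)) (Fin (p + q)) ℂ)
    (hE : E = Matrix.diagonal (fun i : Fin (p + q) => if (i : ℕ) < p then (1 : ℂ) else -1))
    (X B R : Matrix (Fin (p + q)) (Fin (p + q)) ℂ)
    (hX : X * E * Xᴴ = E)
    (hB : B.IsHermitian ∧ B.PosDef)
    (hR : R * Rᴴ = 1)
    (hXBR : X = B * R) :
    B * E * Bᴴ = E ∧ R * E * Rᴴ = E :=
  polar_factors_in_Upq_general p q E hE X B R hX hB hR hXBR
end

section
/- Let γ ∈ ℝ with γ > 0, let a, b ∈ ℝ³ and let M be a real 3×3 matrix, satisfying the relations of a proper Lorentz matrix: ‖a‖² = γ² − 1, ‖b‖² = γ² − 1, γ·b = M·a, γ·a = Mᵀ·b, M·Mᵀ = 1₃ + b bᵀ, and Mᵀ·M = 1₃ + a aᵀ. Let L be the 4×4 block matrix with blocks [[γ, aᵀ], [b, M]], let B be the 4×4 block matrix [[γ, bᵀ], [b, 1₃ + (1/(1+γ)) b bᵀ]], set D := M − (1/(1+γ)) b aᵀ, and let R be the 4×4 block matrix [[1, 0], [0, D]]. Then: (i) L = B * R; (ii) B is symmetric positive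 definite; (iii) D·a = b; (iv) D·Dᵀ = 1₃; and (v) if det L = 1 then det D = 1, i.e. D ∈ SO(3). -/
/-!
With `c = 1/(1+γ)` and `D = M - c b aᵀ`, the identity `γ - c (γ² - 1) = 1` gives `D a = b` and
`Dᵀ b = a`. The second makes the block product `B · diag(1, D)` equal to `L`; the first, together
with `M Mᵀ = 1 + b bᵀ`, gives `D Dᵀ = 1`. For `x = (t, v)` Cauchy–Schwarz and `|b|² = γ² - 1` give
`γ · xᵀ B x ≥ (γ t + b·v)² + |v|²`, so `B` is positive definite. Then `det B > 0`, and
`det L = det B · det D` with `det D = ±1` forces `det D = 1`.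
-/

open Matrix

section

variable {K : Type*} [Field K] {n : Type*}

def boostMatrix [DecidableEq n] (γ : K) (b : n → K) : Matrix (Unit ⊕ n) (Unit ⊕ n) K :=
  fromBlocks (of fun _ _ => γ) (of fun _ j => b j) (of fun i _ => b i)
    (1 + (1 / (1 + γ)) • vecMulVec b b)

def rotationBlock (γ : K) (a b : n → K) (M : Matrix n n K) : Matrix n n K :=
  M - (1 / (1 + γ)) • vecMulVec b a

variable {γ : K} {a b : n → K} {M : Matrix n n K}

theorem transpose_rotationBlock : (rotationBlock γ a b M)ᵀ = rotationBlock γ b a Mᵀ := by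
  rw [rotationBlock, rotationBlock, transpose_sub, transpose_smul, transpose_vecMulVec]

theorem rotationBlock_mulVec [Fintype n] (hγ : 1 + γ ≠ 0) (ha : a ⬝ᵥ a = γ ^ 2 - 1)
    (hMa : M *ᵥ a = γ • b) : rotationBlock γ a b M *ᵥ a = b := by
  rw [rotationBlock, sub_mulVec, smul_mulVec, vecMulVec_mulVec, op_smul_eq_smul, ha, hMa]
  match_scalars
  field_simp
  ring

theorem rotationBlock_mul_transpose [Fintype n] [DecidableEq n] (hγ : 1 + γ ≠ 0)
    (ha : a ⬝ᵥ a = γ ^ 2 - 1) (hMa : M *ᵥ a = γ • b) (hMMt : M * Mᵀ = 1 + vecMulVec b b) :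
    rotationBlock γ a b M * (rotationBlock γ a b M)ᵀ = 1 := by
  have hDa := rotationBlock_mulVec hγ ha hMa
  calc _ = rotationBlock γ a b M * Mᵀ - (1 / (1 + γ)) • vecMulVec b b := by
        rw [transpose_rotationBlock, rotationBlock.eq_1 γ b a, Matrix.mul_sub, Matrix.mul_smul,
          mul_vecMulVec, hDa]
    _ = 1 + (1 - 1 / (1 + γ) * γ - 1 / (1 + γ)) • vecMulVec b b := by
        rw [rotationBlock, Matrix.sub_mul, Matrix.smul_mul, vecMulVec_mul, vecMul_transpose, hMa,
          hMMt, vecMulVec_smul]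
        module
    _ = 1 := by
        rw [show 1 - 1 / (1 + γ) * γ - 1 / (1 + γ) = 0 by field_simp; ring, zero_smul, add_zero]

theorem boostMatrix_mul_fromBlocks_rotationBlock [Fintype n] [DecidableEq n] (hγ : 1 + γ ≠ 0)
    (hb : b ⬝ᵥ b = γ ^ 2 - 1) (hMtb : Mᵀ *ᵥ b = γ • a) :
    boostMatrix γ b * fromBlocks 1 0 0 (rotationBlock γ a b M) =
      fromBlocks (of fun _ _ => γ) (of fun _ j => a j) (of fun i _ => b i) M := by
  have hDtb : b ᵥ* rotationBlock γ a b M = a := by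
    rw [← mulVec_transpose, transpose_rotationBlock, rotationBlock_mulVec hγ hb hMtb]
  have hrow : (of fun _ j => b j : Matrix Unit n K) * rotationBlock γ a b M =
      of fun _ j => a j := by
    rw [← replicateRow, ← replicateRow_vecMul, hDtb]; rfl
  have hcorner : (1 + (1 / (1 + γ)) • vecMulVec b b) * rotationBlock γ a b M = M := by
    rw [Matrix.add_mul, Matrix.one_mul, Matrix.smul_mul, vecMulVec_mul, hDtb, rotationBlock,
      sub_add_cancel]
  rw [boostMatrix, fromBlocks_multiply]
  simp only [Matrix.mul_one, Matrix.mul_zero, add_zero, zero_add, hrow, hcorner]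

theorem transpose_boostMatrix [DecidableEq n] : (boostMatrix γ b)ᵀ = boostMatrix γ b := by
  rw [boostMatrix, fromBlocks_transpose, transpose_add, transpose_one, transpose_smul,
    transpose_vecMulVec]
  rfl

theorem boostMatrix_mulVec [Fintype n] [DecidableEq n] (t : Unit → K) (v : n → K) :
    boostMatrix γ b *ᵥ Sum.elim t v =
      Sum.elim (fun _ => γ * t () + b ⬝ᵥ v) (t () • b + v + (1 / (1 + γ) * (b ⬝ᵥ v)) • b) := by
  rw [boostMatrix, fromBlocks_mulVec, add_mulVec, one_mulVec, smul_mulVec, vecMulVec_mulVec,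
    op_smul_eq_smul, smul_smul]
  congr 1
  · ext; simp [mulVec, dotProduct]
  · ext; simp [mulVec, dotProduct, mul_comm, add_assoc]

theorem dotProduct_boostMatrix_mulVec [Fintype n] [DecidableEq n] (t : Unit → K) (v : n → K) :
    Sum.elim t v ⬝ᵥ (boostMatrix γ b *ᵥ Sum.elim t v) =
      γ * t () ^ 2 + 2 * t () * (b ⬝ᵥ v) + v ⬝ᵥ v + 1 / (1 + γ) * (b ⬝ᵥ v) ^ 2 := by
  rw [boostMatrix_mulVec, sumElim_dotProduct_sumElim]
  simp only [dotProduct_add, dotProduct_smul, smul_eq_mul, dotProduct_comm v b]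
  simp only [dotProduct, Finset.univ_unique, PUnit.default_eq_unit, Finset.sum_singleton]
  ring

end

theorem dotProduct_sq_le_dotProduct_self_mul {R : Type*} [CommRing R] [LinearOrder R]
    [IsStrictOrderedRing R] {n : Type*} [Fintype n] (u v : n → R) :
    (u ⬝ᵥ v) ^ 2 ≤ (u ⬝ᵥ u) * (v ⬝ᵥ v) := by
  simpa only [dotProduct, ← sq] using Finset.sum_mul_sq_le_sq_mul_sq Finset.univ u v

theorem det_eq_one_of_mul_transpose_eq_one {R : Type*} [CommRing R] [LinearOrder R]
    [IsStrictOrderedRing R] {n : Type*} [Fintype n] [DecidableEq n] {D : Matrix n n R}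
    (hD : D * Dᵀ = 1) (hdet : 0 < D.det) : D.det = 1 := by
  have hsq : D.det * D.det = 1 := by
    simpa only [det_mul, det_transpose, det_one] using congrArg det hD
  exact (mul_self_eq_one_iff.mp hsq).resolve_right (by linarith)

theorem posDef_boostMatrix {n : Type*} [Fintype n] [DecidableEq n] {γ : ℝ} {b : n → ℝ}
    (hγ : 0 < γ) (hb : b ⬝ᵥ b = γ ^ 2 - 1) : (boostMatrix γ b).PosDef := by
  refine posDef_iff_dotProduct_mulVec.mpr
    ⟨(conjTranspose_eq_transpose_of_trivial _).trans transpose_boostMatrix, fun x hx => ?_⟩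
  rw [star_trivial, ← Sum.elim_comp_inl_inr x, dotProduct_boostMatrix_mulVec]
  set t := x (Sum.inl ())
  set v := x ∘ Sum.inr
  set s := b ⬝ᵥ v
  have hcs : s ^ 2 ≤ (γ ^ 2 - 1) * (v ⬝ᵥ v) := hb ▸ dotProduct_sq_le_dotProduct_self_mul b v
  have hlower : (γ * t + s) ^ 2 + v ⬝ᵥ v ≤
      γ * (γ * t ^ 2 + 2 * t * s + v ⬝ᵥ v + 1 / (1 + γ) * s ^ 2) := by
    have hw : 1 / (1 + γ) * s ^ 2 * (1 + γ) = s ^ 2 := by field_simp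
    nlinarith
  have hpos : 0 < (γ * t + s) ^ 2 + v ⬝ᵥ v := by
    rcases eq_or_ne v 0 with hv | hv
    · have ht : t ≠ 0 := by
        rintro ht
        apply hx
        ext (_ | i)
        · exact ht
        · exact congrFun hv i
      simpa [s, hv] using pow_two_pos_of_ne_zero (mul_ne_zero hγ.ne' ht)
    · have := dotProduct_star_self_pos_iff.mpr hv
      rw [star_trivial] at this
      positivity
  exact pos_of_mul_pos_right (hpos.trans_le hlower) hγ.le

open Matrix in
theorem lorentz_polar_decomposition_general
    (γ : ℝ) (hγ : 0 < γ) (a b : Fin 3 → ℝ) (M : Matrix (Fin 3) (Fin 3) ℝ)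
    (ha : ∑ i, a i * a i = γ ^ 2 - 1)
    (hb : ∑ i, b i * b i = γ ^ 2 - 1)
    (hMa : γ • b = M *ᵥ a)
    (hMtb : γ • a = Mᵀ *ᵥ b)
    (hMMt : M * Mᵀ = 1 + Matrix.vecMulVec b b)
    (L B : Matrix (Unit ⊕ Fin 3) (Unit ⊕ Fin 3) ℝ)
    (D : Matrix (Fin 3) (Fin 3) ℝ)
    (R : Matrix (Unit ⊕ Fin 3) (Unit ⊕ Fin 3) ℝ)
    (hL : L = Matrix.fromBlocks (Matrix.of fun _ _ => γ) (Matrix.of fun _ j => a j)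
      (Matrix.of fun i _ => b i) M)
    (hB : B = Matrix.fromBlocks (Matrix.of fun _ _ => γ) (Matrix.of fun _ j => b j)
      (Matrix.of fun i _ => b i) (1 + (1 / (1 + γ)) • Matrix.vecMulVec b b))
    (hD : D = M - (1 / (1 + γ)) • Matrix.vecMulVec b a)
    (hR : R = Matrix.fromBlocks 1 0 0 D) :
    L = B * R ∧ Bᵀ = B ∧ B.PosDef ∧ D *ᵥ a = b ∧ D * Dᵀ = 1 ∧
    (L.det = 1 → D.det = 1) := by
  change B = boostMatrix γ b at hB
  change D = rotationBlock γ a b M at hD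
  have hγ' : 1 + γ ≠ 0 := by positivity
  have hLBR : L = B * R := by
    rw [hL, hB, hR, hD, boostMatrix_mul_fromBlocks_rotationBlock hγ' hb hMtb.symm]
  have hBpd : B.PosDef := hB ▸ posDef_boostMatrix hγ hb
  have hDDt : D * Dᵀ = 1 := hD ▸ rotationBlock_mul_transpose hγ' ha hMa.symm hMMt
  refine ⟨hLBR, hB ▸ transpose_boostMatrix, hBpd, hD ▸ rotationBlock_mulVec hγ' ha hMa.symm,
    hDDt, fun hL1 => det_eq_one_of_mul_transpose_eq_one hDDt ?_⟩
  have hdet : B.det * D.det = 1 := by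
    rw [← hL1, hLBR, det_mul, hR, det_fromBlocks_zero₂₁, det_one, one_mul]
  exact pos_of_mul_pos_right (hdet ▸ one_pos) hBpd.det_pos.le

open Matrix in
/-- Explicit polar decomposition of a proper orthochronous Lorentz matrix
`L = [[γ, aᵀ],[b, M]]` into a boost `B` and a spatial rotation `R = diag(1, D)`,
with `D = M - (1/(1+γ)) b aᵀ`. -/
theorem lorentz_polar_decomposition
    (γ : ℝ) (hγ : 0 < γ) (a b : Fin 3 → ℝ) (M : Matrix (Fin 3) (Fin 3) ℝ)
    (ha : ∑ i, a i * a i = γ ^ 2 - 1)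
    (hb : ∑ i, b i * b i = γ ^ 2 - 1)
    (hMa : γ • b = M *ᵥ a)
    (hMtb : γ • a = Mᵀ *ᵥ b)
    (hMMt : M * Mᵀ = 1 + Matrix.vecMulVec b b)
    (hMtM : Mᵀ * M = 1 + Matrix.vecMulVec a a)
    (L B : Matrix (Unit ⊕ Fin 3) (Unit ⊕ Fin 3) ℝ)
    (D : Matrix (Fin 3) (Fin 3) ℝ)
    (R : Matrix (Unit ⊕ Fin 3) (Unit ⊕ Fin 3) ℝ)
    (hL : L = Matrix.fromBlocks (Matrix.of fun _ _ => γ) (Matrix.of fun _ j => a j)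
      (Matrix.of fun i _ => b i) M)
    (hB : B = Matrix.fromBlocks (Matrix.of fun _ _ => γ) (Matrix.of fun _ j => b j)
      (Matrix.of fun i _ => b i) (1 + (1 / (1 + γ)) • Matrix.vecMulVec b b))
    (hD : D = M - (1 / (1 + γ)) • Matrix.vecMulVec b a)
    (hR : R = Matrix.fromBlocks 1 0 0 D) :
    L = B * R ∧ Bᵀ = B ∧ B.PosDef ∧ D *ᵥ a = b ∧ D * Dᵀ = 1 ∧
    (L.det = 1 → D.det = 1) :=
  lorentz_polar_decomposition_general γ hγ a b M ha hb hMa hMtb hMMt L B D R hL hB hD hR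
end

section
/- For all β₁, β₂ ∈ ℝ³ with ‖β₁‖ < 1 and ‖β₂‖ < 1, one has ‖β₁ ⋆ β₂‖ < 1, and there exists a rotation matrix D ∈ SO(3) (a real 3×3 matrix with D·Dᵀ = 1₃ and det D = 1) such that B(β₁) * B(β₂) = B(β₁ ⋆ β₂) * R(D). That is, the composition of two Lorentz boosts is a boost followed by a spatial rotation (the Thomas rotation). -/
open Matrix

noncomputable section

/-- Euclidean dot product on `ℝ³`. -/
def dot3 (u v : Fin 3 → ℝ) : ℝ := ∑ i, u i * v i

/-- The Lorentz factor `γ(β) = 1/√(1 - ‖β‖²)`. -/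
def gam (β : Fin 3 → ℝ) : ℝ := 1 / Real.sqrt (1 - dot3 β β)

/-- The Lorentz boost with velocity `β`, as a 4×4 matrix over `Unit ⊕ Fin 3`
(the `Unit` index is the time coordinate): time-time entry `γ`, time-space and
space-time entries `γ βᵢ`, space-space entries `δᵢⱼ + (γ²/(1+γ)) βᵢ βⱼ`. -/
def boost (β : Fin 3 → ℝ) : Matrix (Unit ⊕ Fin 3) (Unit ⊕ Fin 3) ℝ :=
  Matrix.fromBlocks (Matrix.of fun _ _ => gam β)
    (Matrix.of fun _ j => gam β * β j)
    (Matrix.of fun i _ => gam β * β i)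
    ((1 : Matrix (Fin 3) (Fin 3) ℝ) + ((gam β) ^ 2 / (1 + gam β)) • Matrix.vecMulVec β β)

/-- The spatial rotation `R(D) = diag(1, D)` as a 4×4 matrix. -/
def rot (D : Matrix (Fin 3) (Fin 3) ℝ) : Matrix (Unit ⊕ Fin 3) (Unit ⊕ Fin 3) ℝ :=
  Matrix.fromBlocks 1 0 0 D

/-- Relativistic composition of velocities:
`β₁ ⋆ β₂ = [β₁ + γ₁⁻¹ β₂ + (γ₁/(1+γ₁)) (β₁·β₂) β₁] / (1 + β₁·β₂)`. -/
def vcomp (β₁ β₂ : Fin 3 → ℝ) : Fin 3 → ℝ :=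
  (1 / (1 + dot3 β₁ β₂)) •
    (β₁ + (gam β₁)⁻¹ • β₂ + (gam β₁ / (1 + gam β₁)) • dot3 β₁ β₂ • β₁)

end

noncomputable section ThomasAux
open Matrix

/-! ### dot3 lemmas -/

private lemma dot3_comm (u v : Fin 3 → ℝ) : dot3 u v = dot3 v u :=
  Finset.sum_congr rfl fun i _ => mul_comm _ _

private lemma dot3_add_left (u v w : Fin 3 → ℝ) : dot3 (u + v) w = dot3 u w + dot3 v w := by
  simp [dot3, add_mul, Finset.sum_add_distrib]

private lemma dot3_add_right (u v w : Fin 3 → ℝ) : dot3 u (v + w) = dot3 u v + dot3 u w := by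
  simp [dot3, mul_add, Finset.sum_add_distrib]

private lemma dot3_smul_left (c : ℝ) (u v : Fin 3 → ℝ) : dot3 (c • u) v = c * dot3 u v := by
  simp only [dot3, Pi.smul_apply, smul_eq_mul, Finset.mul_sum]
  exact Finset.sum_congr rfl fun i _ => by ring

private lemma dot3_smul_right (c : ℝ) (u v : Fin 3 → ℝ) : dot3 u (c • v) = c * dot3 u v := by
  simp only [dot3, Pi.smul_apply, smul_eq_mul, Finset.mul_sum]
  exact Finset.sum_congr rfl fun i _ => by ring

private lemma dot3_mul_left (a : ℝ) (u v : Fin 3 → ℝ) :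
    dot3 (fun i => a * u i) v = a * dot3 u v := by
  simp only [dot3, Finset.mul_sum]
  exact Finset.sum_congr rfl fun i _ => by ring

private lemma dot3_neg_right (u v : Fin 3 → ℝ) : dot3 u (-v) = -dot3 u v := by
  simp [dot3]

private lemma dot3_neg_neg (u : Fin 3 → ℝ) : dot3 (-u) (-u) = dot3 u u := by
  simp [dot3]

private lemma dot3_nonneg (u : Fin 3 → ℝ) : 0 ≤ dot3 u u :=
  Finset.sum_nonneg fun i _ => mul_self_nonneg _

/-! ### gam lemmas -/

private lemma gam_pos {β : Fin 3 → ℝ} (h : dot3 β β < 1) : 0 < gam β := by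
  have : 0 < Real.sqrt (1 - dot3 β β) := Real.sqrt_pos.mpr (by linarith)
  exact one_div_pos.mpr this

private lemma gam_neg (β : Fin 3 → ℝ) : gam (-β) = gam β := by
  unfold gam
  rw [dot3_neg_neg]

/-! ### block product helpers -/

private lemma mul_UU (a b : ℝ) :
    (of fun _ _ => a : Matrix Unit Unit ℝ) * (of fun _ _ => b) = of fun _ _ => a * b := by
  ext i j; rw [Matrix.mul_apply, Fintype.sum_unique]; rfl

private lemma mul_UR (a : ℝ) (f : Fin 3 → ℝ) :
    (of fun _ _ => a : Matrix Unit Unit ℝ) * (of fun _ j => f j : Matrix Unit (Fin 3) ℝ) = of fun _ j => a * f j := by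
  ext i j; rw [Matrix.mul_apply, Fintype.sum_unique]; rfl

private lemma mul_CU (a : ℝ) (f : Fin 3 → ℝ) :
    (of fun i _ => f i : Matrix (Fin 3) Unit ℝ) * (of fun _ _ => a : Matrix Unit Unit ℝ) =
      (of fun i _ => f i * a : Matrix (Fin 3) Unit ℝ) := by
  ext i j; rw [Matrix.mul_apply, Fintype.sum_unique]; rfl

private lemma mul_RC (a b : ℝ) (u v : Fin 3 → ℝ) :
    (of fun _ j => a * u j : Matrix Unit (Fin 3) ℝ) * (of fun i _ => b * v i : Matrix (Fin 3) Unit ℝ) =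
      (of fun _ _ => a * b * dot3 u v : Matrix Unit Unit ℝ) := by
  ext i j
  rw [Matrix.mul_apply]
  simp only [of_apply, dot3, Finset.mul_sum]
  exact Finset.sum_congr rfl fun k _ => by ring

private lemma mul_CR (a b : ℝ) (u v : Fin 3 → ℝ) :
    (of fun i _ => a * u i : Matrix (Fin 3) Unit ℝ) * (of fun _ j => b * v j : Matrix Unit (Fin 3) ℝ) =
      of fun i j => a * b * (u i * v j) := by
  ext i j
  rw [Matrix.mul_apply, Fintype.sum_unique]
  simp only [of_apply]; ring

private lemma mul_RW (a : ℝ) (u w x : Fin 3 → ℝ) :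
    (of fun _ j => a * u j : Matrix Unit (Fin 3) ℝ) * vecMulVec w x =
      of fun _ j => a * dot3 u w * x j := by
  ext i j
  rw [Matrix.mul_apply]
  simp only [of_apply, vecMulVec_apply, dot3, Finset.sum_mul, Finset.mul_sum]
  exact Finset.sum_congr rfl fun k _ => by ring

private lemma mul_WC (a : ℝ) (u w x : Fin 3 → ℝ) :
    vecMulVec w x * (of fun i _ => a * u i : Matrix (Fin 3) Unit ℝ) =
      (of fun i _ => a * dot3 x u * w i : Matrix (Fin 3) Unit ℝ) := by
  ext i j
  rw [Matrix.mul_apply]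
  simp only [of_apply, vecMulVec_apply, dot3, Finset.sum_mul, Finset.mul_sum]
  exact Finset.sum_congr rfl fun k _ => by ring

private lemma mul_WW (u v w x : Fin 3 → ℝ) :
    vecMulVec u v * vecMulVec w x = dot3 v w • vecMulVec u x := by
  ext i j
  rw [Matrix.mul_apply]
  simp only [vecMulVec_apply, Matrix.smul_apply, smul_eq_mul, dot3, Finset.sum_mul, Finset.mul_sum]
  exact Finset.sum_congr rfl fun k _ => by ring

private lemma vmv_neg_neg (u : Fin 3 → ℝ) : vecMulVec (-u) (-u) = vecMulVec u u := by
  ext i j; simp [vecMulVec_apply]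

/-! ### the fundamental product formula -/

private lemma boost_mul_eq (β₁ β₂ : Fin 3 → ℝ) :
    boost β₁ * boost β₂ = fromBlocks
      (of fun _ _ => gam β₁ * gam β₂ * (1 + dot3 β₁ β₂))
      (of fun _ j => gam β₁ *
        (gam β₂ * β₂ j + β₁ j + gam β₂ ^ 2 / (1 + gam β₂) * dot3 β₁ β₂ * β₂ j))
      (of fun i _ => gam β₂ *
        (gam β₁ * β₁ i + β₂ i + gam β₁ ^ 2 / (1 + gam β₁) * dot3 β₁ β₂ * β₁ i))
      (1 + (gam β₁ ^ 2 / (1 + gam β₁)) • vecMulVec β₁ β₁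
         + (gam β₂ ^ 2 / (1 + gam β₂)) • vecMulVec β₂ β₂
         + (gam β₁ * gam β₂ +
             gam β₁ ^ 2 / (1 + gam β₁) * (gam β₂ ^ 2 / (1 + gam β₂)) * dot3 β₁ β₂) •
             vecMulVec β₁ β₂) := by
  set g₁ := gam β₁
  set g₂ := gam β₂
  set c₁ := g₁ ^ 2 / (1 + g₁)
  set c₂ := g₂ ^ 2 / (1 + g₂)
  rw [boost, boost, fromBlocks_multiply, fromBlocks_inj]
  refine ⟨?_, ?_, ?_, ?_⟩ <;>
  · simp only [mul_UU, mul_UR, mul_CU, Matrix.mul_add, Matrix.add_mul, Matrix.mul_one,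
      Matrix.one_mul, Matrix.smul_mul, Matrix.mul_smul, mul_RC, mul_CR, mul_RW, mul_WC,
      mul_WW, smul_smul]
    ext i j
    simp only [Matrix.add_apply, Matrix.smul_apply, Matrix.one_apply, of_apply,
      vecMulVec_apply, smul_eq_mul]
    ring


/-! ### eta, transpose, inverse -/

private def etaM : Matrix (Unit ⊕ Fin 3) (Unit ⊕ Fin 3) ℝ := fromBlocks 1 0 0 (-1)

private lemma etaM_mul_etaM : etaM * etaM = 1 := by
  rw [etaM, fromBlocks_multiply]
  simp only [Matrix.mul_one, Matrix.one_mul, Matrix.mul_zero, Matrix.zero_mul, add_zero,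
    zero_add, Matrix.neg_mul, Matrix.mul_neg, neg_neg, neg_zero]
  rw [fromBlocks_one]

private lemma eta_mul_boost_mul_eta (β : Fin 3 → ℝ) : etaM * boost β * etaM = boost (-β) := by
  rw [etaM, boost, fromBlocks_multiply, fromBlocks_multiply]
  simp only [Matrix.one_mul, Matrix.mul_one, Matrix.zero_mul, Matrix.mul_zero, add_zero,
    zero_add, Matrix.neg_mul, Matrix.mul_neg, neg_neg]
  rw [boost, fromBlocks_inj]
  refine ⟨?_, ?_, ?_, ?_⟩
  · rw [gam_neg]
  · ext i j; simp [gam_neg]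
  · ext i j; simp [gam_neg]
  · rw [gam_neg, vmv_neg_neg]

private lemma boost_transpose (β : Fin 3 → ℝ) : (boost β)ᵀ = boost β := by
  rw [boost, fromBlocks_transpose, fromBlocks_inj]
  refine ⟨?_, ?_, ?_, ?_⟩
  · ext i j; simp
  · ext i j; simp
  · ext i j; simp
  · rw [transpose_add, transpose_one, transpose_smul]
    congr 1
    ext i j
    simp [vecMulVec_apply, mul_comm]

private lemma boost_mul_boost_neg {β : Fin 3 → ℝ} (h : dot3 β β < 1) :
    boost β * boost (-β) = 1 := by
  have hb0 := dot3_nonneg β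
  set t := Real.sqrt (1 - dot3 β β) with htdef
  have htpos : 0 < t := Real.sqrt_pos.mpr (by linarith)
  have htne : t ≠ 0 := ne_of_gt htpos
  have ht2 : t ^ 2 = 1 - dot3 β β := Real.sq_sqrt (by linarith)
  have hg : gam β = 1 / t := by rw [gam, ← htdef]
  have hb : dot3 β β = 1 - t ^ 2 := by linarith
  have h1t : (1 : ℝ) + 1 / t ≠ 0 := by
    have : 0 < 1 / t := by positivity
    linarith
  have hvm : vecMulVec β (-β) = -vecMulVec β β := by
    ext i j; simp [vecMulVec_apply]
  rw [boost_mul_eq β (-β), gam_neg, dot3_neg_right, vmv_neg_neg, hvm, ← fromBlocks_one,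
    fromBlocks_inj]
  refine ⟨?_, ?_, ?_, ?_⟩
  · ext i j
    cases i; cases j
    rw [Matrix.one_apply_eq]
    simp only [of_apply]
    rw [hg, hb]
    field_simp
    ring
  · ext i j
    simp only [of_apply, Matrix.zero_apply, Pi.neg_apply]
    rw [hg, hb]
    field_simp
    ring
  · ext i j
    simp only [of_apply, Matrix.zero_apply, Pi.neg_apply]
    rw [hg, hb]
    field_simp
    ring
  · have hco : gam β * gam β + gam β ^ 2 / (1 + gam β) * (gam β ^ 2 / (1 + gam β)) * -dot3 β β
        = 2 * (gam β ^ 2 / (1 + gam β)) := by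
      rw [hg, hb]
      field_simp
      ring
    rw [hco]
    module

private lemma boost_eta {β : Fin 3 → ℝ} (h : dot3 β β < 1) :
    boost β * etaM * boost β = etaM := by
  have h1 : boost β * etaM * boost β * etaM = 1 := by
    have e : boost β * etaM * boost β * etaM = boost β * (etaM * boost β * etaM) := by
      simp only [mul_assoc]
    rw [e, eta_mul_boost_mul_eta, boost_mul_boost_neg h]
  calc boost β * etaM * boost β = boost β * etaM * boost β * (etaM * etaM) := by
        rw [etaM_mul_etaM, mul_one]
    _ = boost β * etaM * boost β * etaM * etaM := by simp only [mul_assoc]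
    _ = etaM := by rw [h1, one_mul]

/-! ### determinant -/

private lemma det_boost {β : Fin 3 → ℝ} (h : dot3 β β < 1) : (boost β).det = 1 := by
  have hb0 := dot3_nonneg β
  set t := Real.sqrt (1 - dot3 β β) with htdef
  have htpos : 0 < t := Real.sqrt_pos.mpr (by linarith)
  have htne : t ≠ 0 := ne_of_gt htpos
  have ht2 : t ^ 2 = 1 - dot3 β β := Real.sq_sqrt (by linarith)
  have hg : gam β = 1 / t := by rw [gam, ← htdef]
  have hb : dot3 β β = 1 - t ^ 2 := by linarith
  have hgpos : 0 < gam β := gam_pos h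
  have hgne : gam β ≠ 0 := ne_of_gt hgpos
  have h1t : (1 : ℝ) + 1 / t ≠ 0 := by
    have : 0 < 1 / t := by positivity
    linarith
  rw [boost]
  letI : Invertible (of fun _ _ => gam β : Matrix Unit Unit ℝ) :=
    ⟨(of fun _ _ => (gam β)⁻¹ : Matrix Unit Unit ℝ),
      by rw [mul_UU]; ext i j; cases i; cases j;
         rw [Matrix.one_apply_eq]; simp [inv_mul_cancel₀ hgne],
      by rw [mul_UU]; ext i j; cases i; cases j;
         rw [Matrix.one_apply_eq]; simp [mul_inv_cancel₀ hgne]⟩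
  rw [det_fromBlocks₁₁]
  have hIA : (⅟(of fun _ _ => gam β : Matrix Unit Unit ℝ)) =
      (of fun _ _ => (gam β)⁻¹ : Matrix Unit Unit ℝ) := rfl
  have hCAB : (of fun i _ => gam β * β i : Matrix (Fin 3) Unit ℝ) *
        (⅟(of fun _ _ => gam β : Matrix Unit Unit ℝ)) *
        (of fun _ j => gam β * β j : Matrix Unit (Fin 3) ℝ) = gam β • vecMulVec β β := by
    rw [hIA]
    ext i j
    rw [Matrix.mul_apply, Fintype.sum_unique, Matrix.mul_apply, Fintype.sum_unique]
    simp only [of_apply, Matrix.smul_apply, vecMulVec_apply, smul_eq_mul]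
    field_simp
  rw [hCAB]
  have hscw : (1 + (gam β ^ 2 / (1 + gam β)) • vecMulVec β β) - gam β • vecMulVec β β =
      1 + replicateCol Unit ((gam β ^ 2 / (1 + gam β) - gam β) • β) * replicateRow Unit β := by
    rw [← vecMulVec_eq]
    ext i j
    simp only [Matrix.sub_apply, Matrix.add_apply, Matrix.smul_apply, vecMulVec_apply,
      smul_eq_mul, Pi.smul_apply]
    ring
  rw [hscw, det_one_add_replicateCol_mul_replicateRow, det_unique]
  simp only [of_apply]
  rw [dotProduct_smul]
  have hdd : β ⬝ᵥ β = dot3 β β := rfl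
  rw [smul_eq_mul, hdd, hg, hb]
  field_simp
  ring

/-! ### block-column extraction -/

private lemma toBlocks₁₁_mul (X Y : Matrix (Unit ⊕ Fin 3) (Unit ⊕ Fin 3) ℝ) :
    (X * Y).toBlocks₁₁ = X.toBlocks₁₁ * Y.toBlocks₁₁ + X.toBlocks₁₂ * Y.toBlocks₂₁ := by
  conv_lhs => rw [← fromBlocks_toBlocks X, ← fromBlocks_toBlocks Y, fromBlocks_multiply]
  rw [toBlocks_fromBlocks₁₁]

private lemma toBlocks₂₁_mul (X Y : Matrix (Unit ⊕ Fin 3) (Unit ⊕ Fin 3) ℝ) :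
    (X * Y).toBlocks₂₁ = X.toBlocks₂₁ * Y.toBlocks₁₁ + X.toBlocks₂₂ * Y.toBlocks₂₁ := by
  conv_lhs => rw [← fromBlocks_toBlocks X, ← fromBlocks_toBlocks Y, fromBlocks_multiply]
  rw [toBlocks_fromBlocks₂₁]

/-! ### scalar facts about vcomp -/

private lemma one_add_dot3_pos {β₁ β₂ : Fin 3 → ℝ} (h₁ : dot3 β₁ β₁ < 1)
    (h₂ : dot3 β₂ β₂ < 1) : 0 < 1 + dot3 β₁ β₂ := by
  have hcs : (∑ i, β₁ i * β₂ i) ^ 2 ≤ (∑ i, β₁ i ^ 2) * ∑ i, β₂ i ^ 2 :=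
    Finset.sum_mul_sq_le_sq_mul_sq Finset.univ β₁ β₂
  have e₁ : ∑ i, β₁ i ^ 2 = dot3 β₁ β₁ := by simp [dot3, sq]
  have e₂ : ∑ i, β₂ i ^ 2 = dot3 β₂ β₂ := by simp [dot3, sq]
  have hd : (∑ i, β₁ i * β₂ i) = dot3 β₁ β₂ := rfl
  rw [e₁, e₂, hd] at hcs
  nlinarith [dot3_nonneg β₁, dot3_nonneg β₂]

private lemma key_ident {β₁ β₂ : Fin 3 → ℝ} (h₁ : dot3 β₁ β₁ < 1) (h₂ : dot3 β₂ β₂ < 1) :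
    (1 + dot3 β₁ β₂) ^ 2 * (1 - dot3 (vcomp β₁ β₂) (vcomp β₁ β₂)) =
      (1 - dot3 β₁ β₁) * (1 - dot3 β₂ β₂) := by
  have hd := one_add_dot3_pos h₁ h₂
  have hb0 := dot3_nonneg β₁
  set t := Real.sqrt (1 - dot3 β₁ β₁) with htdef
  have htpos : 0 < t := Real.sqrt_pos.mpr (by linarith)
  have htne : t ≠ 0 := ne_of_gt htpos
  have ht2 : t ^ 2 = 1 - dot3 β₁ β₁ := Real.sq_sqrt (by linarith)
  have hg : gam β₁ = 1 / t := by rw [gam, ← htdef]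
  have hb : dot3 β₁ β₁ = 1 - t ^ 2 := by linarith
  have hcomm : dot3 β₂ β₁ = dot3 β₁ β₂ := dot3_comm _ _
  have hdne : 1 + dot3 β₁ β₂ ≠ 0 := ne_of_gt hd
  have h1t : (1 : ℝ) + 1 / t ≠ 0 := by
    have : 0 < 1 / t := by positivity
    linarith
  rw [vcomp]
  simp only [dot3_smul_left, dot3_smul_right, dot3_add_left, dot3_add_right]
  rw [hcomm, hg, hb]
  field_simp
  ring

private lemma vcomp_lt_one {β₁ β₂ : Fin 3 → ℝ} (h₁ : dot3 β₁ β₁ < 1) (h₂ : dot3 β₂ β₂ < 1) :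
    dot3 (vcomp β₁ β₂) (vcomp β₁ β₂) < 1 := by
  have hk := key_ident h₁ h₂
  have hd := one_add_dot3_pos h₁ h₂
  nlinarith [mul_pos (sub_pos.mpr h₁) (sub_pos.mpr h₂), pow_pos hd 2]

private lemma gam_vcomp {β₁ β₂ : Fin 3 → ℝ} (h₁ : dot3 β₁ β₁ < 1) (h₂ : dot3 β₂ β₂ < 1) :
    gam (vcomp β₁ β₂) = gam β₁ * gam β₂ * (1 + dot3 β₁ β₂) := by
  have hd := one_add_dot3_pos h₁ h₂
  have hk := key_ident h₁ h₂
  have hb10 := dot3_nonneg β₁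
  have hb20 := dot3_nonneg β₂
  set t₁ := Real.sqrt (1 - dot3 β₁ β₁) with ht₁def
  set t₂ := Real.sqrt (1 - dot3 β₂ β₂) with ht₂def
  have ht₁pos : 0 < t₁ := Real.sqrt_pos.mpr (by linarith)
  have ht₂pos : 0 < t₂ := Real.sqrt_pos.mpr (by linarith)
  have ht₁2 : t₁ ^ 2 = 1 - dot3 β₁ β₁ := Real.sq_sqrt (by linarith)
  have ht₂2 : t₂ ^ 2 = 1 - dot3 β₂ β₂ := Real.sq_sqrt (by linarith)
  have hg₁ : gam β₁ = 1 / t₁ := by rw [gam, ← ht₁def]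
  have hg₂ : gam β₂ = 1 / t₂ := by rw [gam, ← ht₂def]
  have hsq : 1 - dot3 (vcomp β₁ β₂) (vcomp β₁ β₂) = (t₁ * t₂ / (1 + dot3 β₁ β₂)) ^ 2 := by
    rw [div_pow, mul_pow, ht₁2, ht₂2, eq_div_iff (pow_ne_zero 2 (ne_of_gt hd))]
    linear_combination hk
  rw [gam, hsq, Real.sqrt_sq (by positivity)]
  rw [hg₁, hg₂]
  have ht₁ne : t₁ ≠ 0 := ne_of_gt ht₁pos
  have ht₂ne : t₂ ≠ 0 := ne_of_gt ht₂pos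
  field_simp

end ThomasAux

open Matrix in
/-- The composition of two Lorentz boosts is a boost followed by a spatial
rotation (the **Thomas rotation**), and the composed velocity lies again in the
open unit ball. -/
theorem boost_comp_eq_boost_mul_rot (β₁ β₂ : Fin 3 → ℝ)
    (h₁ : dot3 β₁ β₁ < 1) (h₂ : dot3 β₂ β₂ < 1) :
    dot3 (vcomp β₁ β₂) (vcomp β₁ β₂) < 1 ∧
    ∃ D : Matrix (Fin 3) (Fin 3) ℝ, D * Dᵀ = 1 ∧ D.det = 1 ∧
      boost β₁ * boost β₂ = boost (vcomp β₁ β₂) * rot D := by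
  have hd0 : 0 < 1 + dot3 β₁ β₂ := one_add_dot3_pos h₁ h₂
  have hv : dot3 (vcomp β₁ β₂) (vcomp β₁ β₂) < 1 := vcomp_lt_one h₁ h₂
  refine ⟨hv, ?_⟩
  set v := vcomp β₁ β₂ with hvdef
  have hvneg : dot3 (-v) (-v) < 1 := by rw [dot3_neg_neg]; exact hv
  -- the first block column of the product agrees with that of `boost v`
  have hcol11 : (boost β₁ * boost β₂).toBlocks₁₁ = (boost v).toBlocks₁₁ := by
    rw [boost_mul_eq]
    conv_rhs => rw [boost]
    rw [toBlocks_fromBlocks₁₁, toBlocks_fromBlocks₁₁]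
    ext i j
    simp only [of_apply]
    rw [hvdef, gam_vcomp h₁ h₂]
  have hcol21 : (boost β₁ * boost β₂).toBlocks₂₁ = (boost v).toBlocks₂₁ := by
    rw [boost_mul_eq]
    conv_rhs => rw [boost]
    rw [toBlocks_fromBlocks₂₁, toBlocks_fromBlocks₂₁]
    ext i j
    simp only [of_apply]
    rw [hvdef, gam_vcomp h₁ h₂]
    simp only [vcomp, Pi.smul_apply, Pi.add_apply, smul_eq_mul]
    have hb10 := dot3_nonneg β₁
    set t₁ := Real.sqrt (1 - dot3 β₁ β₁) with ht₁def
    have ht₁pos : 0 < t₁ := Real.sqrt_pos.mpr (by linarith)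
    have ht₁ne : t₁ ≠ 0 := ne_of_gt ht₁pos
    have ht₁2 : t₁ ^ 2 = 1 - dot3 β₁ β₁ := Real.sq_sqrt (by linarith)
    have hg₁ : gam β₁ = 1 / t₁ := by rw [gam, ← ht₁def]
    have h1t : (1 : ℝ) + 1 / t₁ ≠ 0 := by
      have : 0 < 1 / t₁ := by positivity
      linarith
    rw [hg₁]
    field_simp
  set M := boost (-v) * (boost β₁ * boost β₂) with hMdef
  have hMT : Mᵀ = boost β₂ * boost β₁ * boost (-v) := by
    rw [hMdef, transpose_mul, transpose_mul, boost_transpose, boost_transpose,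
      boost_transpose]
  have hone : boost (-v) * boost v = 1 := by
    have h := boost_mul_boost_neg hvneg
    rwa [neg_neg] at h
  have h11 : M.toBlocks₁₁ = 1 := by
    rw [hMdef, toBlocks₁₁_mul, hcol11, hcol21, ← toBlocks₁₁_mul, hone, ← fromBlocks_one,
      toBlocks_fromBlocks₁₁]
  have h21 : M.toBlocks₂₁ = 0 := by
    rw [hMdef, toBlocks₂₁_mul, hcol11, hcol21, ← toBlocks₂₁_mul, hone, ← fromBlocks_one,
      toBlocks_fromBlocks₂₁]
  set D := M.toBlocks₂₂ with hDdef
  set bb := M.toBlocks₁₂ with hbbdef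
  have hMeq : M = fromBlocks 1 bb 0 D := by
    conv_lhs => rw [← fromBlocks_toBlocks M]
    rw [h11, h21]
  have hmink : M * etaM * Mᵀ = etaM := by
    rw [hMT, hMdef]
    have e : boost (-v) * (boost β₁ * boost β₂) * etaM * (boost β₂ * boost β₁ * boost (-v)) =
        boost (-v) * (boost β₁ * (boost β₂ * etaM * boost β₂) * boost β₁) * boost (-v) := by
      simp only [mul_assoc]
    rw [e, boost_eta h₂, boost_eta h₁, boost_eta hvneg]
  rw [hMeq, fromBlocks_transpose, etaM, fromBlocks_multiply, fromBlocks_multiply] at hmink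
  simp only [Matrix.mul_one, Matrix.one_mul, Matrix.mul_zero, Matrix.zero_mul, add_zero,
    zero_add, Matrix.mul_neg, Matrix.neg_mul, transpose_one, transpose_zero, neg_zero] at hmink
  rw [fromBlocks_inj] at hmink
  obtain ⟨e11, e12, e21, e22⟩ := hmink
  have hbb0 : bb = 0 := by
    have hz : bb * bbᵀ = 0 := by
      have h' : (1 : Matrix Unit Unit ℝ) + -(bb * bbᵀ) = 1 + 0 := by
        rw [add_zero]; exact e11
      have := add_left_cancel h'
      exact neg_eq_zero.mp this
    ext i j
    have hentry : (bb * bbᵀ) i i = 0 := by rw [hz]; simp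
    rw [Matrix.mul_apply] at hentry
    simp only [Matrix.transpose_apply] at hentry
    have hnn : ∀ k ∈ (Finset.univ : Finset (Fin 3)), 0 ≤ bb i k * bb i k :=
      fun k _ => mul_self_nonneg _
    have hk := (Finset.sum_eq_zero_iff_of_nonneg hnn).mp hentry j (Finset.mem_univ j)
    simpa using mul_self_eq_zero.mp hk
  have hDD : D * Dᵀ = 1 := neg_inj.mp e22
  have hMrot : M = rot D := by rw [hMeq, hbb0, rot]
  have hdetM : M.det = 1 := by
    rw [hMdef, det_mul, det_mul, det_boost hvneg, det_boost h₁, det_boost h₂]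
    norm_num
  have hdetD : D.det = 1 := by
    have h := hdetM
    rw [hMrot, rot, det_fromBlocks_zero₂₁, det_one, one_mul] at h
    exact h
  refine ⟨D, hDD, hdetD, ?_⟩
  have hfin : boost v * M = boost β₁ * boost β₂ := by
    rw [hMdef, ← mul_assoc, boost_mul_boost_neg hv, one_mul]
  rw [← hMrot, hfin]
end

section
/- For all β₁, β₂ ∈ ℝ³ with ‖β₁‖ < 1 and ‖β₂‖ < 1, the squared modulus of the composed velocity is ‖β₁ ⋆ β₂‖² = (‖β₁ + β₂‖² − ‖β₁ × β₂‖²)/(1 + β₁·β₂)², where × denotes the cross product on ℝ³. -/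
open Matrix

lemma key_alg (a b c g : ℝ) (hg : 0 < g) (hga : g ^ 2 * (1 - a) = 1) (hb : 1 + b ≠ 0) :
    (1 / (1 + b)) ^ 2 *
      ((1 + g * b * (1 + g)⁻¹) ^ 2 * a + 2 * (1 + g * b * (1 + g)⁻¹) * g⁻¹ * b + (g⁻¹) ^ 2 * c) =
    (a + 2 * b + c - (a * c - b ^ 2)) / (1 + b) ^ 2 := by
  have hg0 : g ≠ 0 := ne_of_gt hg
  have hg1 : 1 + g ≠ 0 := by positivity
  have ha : a = (g ^ 2 - 1) / g ^ 2 := by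
    field_simp; nlinarith [hga]
  subst ha
  field_simp
  ring

/-- Squared modulus of the composed velocity in terms of the cross product:
`‖β₁ ⋆ β₂‖² = (‖β₁+β₂‖² − ‖β₁×β₂‖²)/(1+β₁·β₂)²`. -/
theorem vcomp_norm_sq_cross (β₁ β₂ : Fin 3 → ℝ)
    (h₁ : dot3 β₁ β₁ < 1) (h₂ : dot3 β₂ β₂ < 1) :
    dot3 (vcomp β₁ β₂) (vcomp β₁ β₂) =
      (dot3 (β₁ + β₂) (β₁ + β₂) -
        dot3 (crossProduct β₁ β₂) (crossProduct β₁ β₂)) / (1 + dot3 β₁ β₂) ^ 2 := by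
  set a := dot3 β₁ β₁ with haa
  set b := dot3 β₁ β₂ with hbb
  set c := dot3 β₂ β₂ with hcc
  set g := gam β₁ with hgg
  have dns : ∀ v : Fin 3 → ℝ, 0 ≤ dot3 v v := fun v =>
    Finset.sum_nonneg fun i _ => mul_self_nonneg _
  have ha0 : 0 ≤ a := haa ▸ dns β₁
  have hc0 : 0 ≤ c := hcc ▸ dns β₂
  have hcross : dot3 (crossProduct β₁ β₂) (crossProduct β₁ β₂) = a * c - b ^ 2 := by
    simp only [haa, hbb, hcc, dot3, crossProduct, Fin.sum_univ_three]
    simp [Fin.isValue]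
    ring
  have hcr0 : 0 ≤ a * c - b ^ 2 := hcross ▸ dns _
  have hb : 1 + b ≠ 0 := by nlinarith
  have h1a : 0 < 1 - a := by linarith
  have hg : 0 < g := by
    rw [hgg, gam, ← haa]
    positivity
  have hga : g ^ 2 * (1 - a) = 1 := by
    rw [hgg, gam, ← haa, div_pow, one_pow, Real.sq_sqrt h1a.le]
    field_simp
  have hsum : dot3 (β₁ + β₂) (β₁ + β₂) = a + 2 * b + c := by
    simp only [haa, hbb, hcc, dot3, Fin.sum_univ_three, Pi.add_apply]; ring
  have hvc : dot3 (vcomp β₁ β₂) (vcomp β₁ β₂) =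
      (1 / (1 + b)) ^ 2 *
        ((1 + g * b * (1 + g)⁻¹) ^ 2 * a + 2 * (1 + g * b * (1 + g)⁻¹) * g⁻¹ * b
          + (g⁻¹) ^ 2 * c) := by
    simp only [haa, hbb, hcc, hgg, dot3, vcomp, Fin.sum_univ_three, Pi.add_apply,
      Pi.smul_apply, smul_eq_mul, div_eq_mul_inv]
    ring
  rw [hvc, hcross, hsum]
  exact key_alg a b c g hg hga hb
end

section
/- Let n > 2 and let v ∈ ℝⁿ be a nonzero vector. Then the strict inverted Cauchy–Schwarz inequality η(v,v)·η(w,w) < η(v,w)² holds for every w ∈ ℝⁿ that is linearly independent of v (i.e. w ∉ span{v}) if and only if v is timelike (η(v,v) > 0). -/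
/-!
A nonzero vector with vanishing time coordinate is spacelike. If `v` is timelike, then `v 0 ≠ 0`,
so the plane spanned by `v` and `w` meets the hyperplane `x 0 = 0` in a nonzero, hence spacelike,
vector; thus `η` is indefinite on that plane and its discriminant `η(v,w)² − η(v,v) η(w,w)` is
positive. If `v` is not timelike, then since `n > 2` the two conditions `w 0 = 0`, `η(v,w) = 0`
leave a nonzero `w`; it is spacelike and not a multiple of `v`, and
`η(v,v) η(w,w) ≥ 0 = η(v,w)²`.
-/

noncomputable section

/-- The Minkowski bilinear form on `ℝⁿ`:
`η(v,w) = v₀ w₀ − ∑_{i≠0} vᵢ wᵢ`. -/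
def eta {n : ℕ} [NeZero n] (v w : Fin n → ℝ) : ℝ :=
  v 0 * w 0 - ∑ i ∈ Finset.univ.erase 0, v i * w i

end

namespace Minkowski

variable {n : ℕ} [NeZero n]

def etaBilin : LinearMap.BilinForm ℝ (Fin n → ℝ) :=
  LinearMap.mk₂ ℝ eta
    (fun v v' w => by
      simp only [eta, Pi.add_apply, add_mul, Finset.sum_add_distrib]; ring)
    (fun c v w => by
      simp only [eta, Pi.smul_apply, smul_eq_mul, mul_assoc, ← Finset.mul_sum]; ring)
    (fun v w w' => by
      simp only [eta, Pi.add_apply, mul_add, Finset.sum_add_distrib]; ring)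
    (fun c v w => by
      simp only [eta, Pi.smul_apply, smul_eq_mul, mul_left_comm _ c, ← Finset.mul_sum]; ring)

@[simp]
theorem etaBilin_apply (v w : Fin n → ℝ) : etaBilin v w = eta v w := rfl

theorem eta_comm (v w : Fin n → ℝ) : eta v w = eta w v := by
  simp only [eta, mul_comm (v _)]

theorem eta_self_neg_of_apply_zero_eq_zero {v : Fin n → ℝ} (h0 : v 0 = 0) (hv : v ≠ 0) :
    eta v v < 0 := by
  obtain ⟨i, hi⟩ := Function.ne_iff.mp hv
  have hi0 : i ≠ 0 := by rintro rfl; exact hi h0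
  have hpos : 0 < ∑ j ∈ Finset.univ.erase 0, v j * v j :=
    Finset.sum_pos' (fun j _ => mul_self_nonneg _)
      ⟨i, Finset.mem_erase.mpr ⟨hi0, Finset.mem_univ _⟩, mul_self_pos.mpr hi⟩
  simp only [eta, h0, mul_zero, zero_sub, neg_lt_zero, hpos]

theorem apply_zero_ne_zero_of_eta_self_pos {v : Fin n → ℝ} (hv : 0 < eta v v) : v 0 ≠ 0 := by
  intro h0
  have hv0 : v ≠ 0 := by rintro rfl; simp [eta] at hv
  exact (eta_self_neg_of_apply_zero_eq_zero h0 hv0).not_gt hv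

theorem eta_mul_eta_lt_sq_of_eta_self_pos {v w : Fin n → ℝ} (hv : 0 < eta v v)
    (hw : w ∉ Submodule.span ℝ {v}) : eta v v * eta w w < eta v w ^ 2 := by
  have hv0 := apply_zero_ne_zero_of_eta_self_pos hv
  set z := w 0 • v - v 0 • w with hz
  have hz0 : z 0 = 0 := by simp only [hz, Pi.sub_apply, Pi.smul_apply, smul_eq_mul]; ring
  have hz_ne : z ≠ 0 := by
    intro h
    refine hw (Submodule.mem_span_singleton.mpr ⟨w 0 / v 0, ?_⟩)
    rw [hz, sub_eq_zero] at h
    rw [div_eq_inv_mul, mul_smul, h, smul_smul, inv_mul_cancel₀ hv0, one_smul]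
  have hzz : eta z z = w 0 ^ 2 * eta v v - 2 * (w 0 * v 0) * eta v w + v 0 ^ 2 * eta w w := by
    rw [← etaBilin_apply]
    simp only [hz, map_sub, map_smul, LinearMap.sub_apply, LinearMap.smul_apply, smul_eq_mul,
      etaBilin_apply, eta_comm w v]
    ring
  have hneg := eta_self_neg_of_apply_zero_eq_zero hz0 hz_ne
  -- completing the square: `η(v,v) η(z,z) = (η(v,v) w₀ − η(v,w) v₀)² + (η(v,v) η(w,w) − η(v,w)²) v₀²`
  nlinarith [sq_nonneg (eta v v * w 0 - eta v w * v 0), sq_pos_of_ne_zero hv0]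

theorem exists_ne_zero_apply_zero_eq_zero_eta_eq_zero (hn : 2 < n) (v : Fin n → ℝ) :
    ∃ w : Fin n → ℝ, w ≠ 0 ∧ w 0 = 0 ∧ eta v w = 0 := by
  let f : (Fin n → ℝ) →ₗ[ℝ] ℝ × ℝ := (LinearMap.proj 0).prod (etaBilin v)
  have hker : LinearMap.ker f ≠ ⊥ :=
    LinearMap.ker_ne_bot_of_finrank_lt (by simpa using hn)
  obtain ⟨w, hwf, hw⟩ := Submodule.exists_mem_ne_zero_of_ne_bot hker
  simp only [LinearMap.mem_ker, f, LinearMap.prod_apply, Function.prod, LinearMap.coe_proj,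
    Function.eval, etaBilin_apply, Prod.mk_eq_zero] at hwf
  exact ⟨w, hw, hwf.1, hwf.2⟩

theorem notMem_span_singleton_of_apply_zero_eq_zero_of_eta_eq_zero {v w : Fin n → ℝ}
    (hv : v ≠ 0) (hw : w ≠ 0) (hw0 : w 0 = 0) (hvw : eta v w = 0) :
    w ∉ Submodule.span ℝ {v} := by
  intro hmem
  obtain ⟨c, rfl⟩ := Submodule.mem_span_singleton.mp hmem
  have hc : c ≠ 0 := by rintro rfl; simp at hw
  have hv0 : v 0 = 0 := by simpa [hc] using hw0
  have hvv : eta v v = 0 := by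
    rw [← etaBilin_apply, map_smul, smul_eq_mul, etaBilin_apply] at hvw
    simpa [hc] using hvw
  exact (eta_self_neg_of_apply_zero_eq_zero hv0 hv).ne hvv

end Minkowski

open Minkowski in
/-- The strict inverted Cauchy–Schwarz inequality
`η(v,v) η(w,w) < η(v,w)²` holds for all `w` linearly independent of `v`
iff `v` is timelike (for `n > 2`). -/
theorem strict_inverted_cauchy_schwarz_iff_timelike {n : ℕ} [NeZero n]
    (hn : 2 < n) (v : Fin n → ℝ) (hv : v ≠ 0) :
    (∀ w : Fin n → ℝ, w ∉ Submodule.span ℝ {v} →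
      eta v v * eta w w < (eta v w) ^ 2) ↔ 0 < eta v v := by
  refine ⟨fun h => ?_, fun hvv w hw => eta_mul_eta_lt_sq_of_eta_self_pos hvv hw⟩
  by_contra hvv
  obtain ⟨w, hw, hw0, hvw⟩ := exists_ne_zero_apply_zero_eq_zero_eta_eq_zero hn v
  have hlt := h w (notMem_span_singleton_of_apply_zero_eq_zero_of_eta_eq_zero hv hw hw0 hvw)
  rw [hvw, sq, mul_zero] at hlt
  exact (mul_nonneg_of_nonpos_of_nonpos (not_lt.mp hvv)
    (eta_self_neg_of_apply_zero_eq_zero hw0 hw).le).not_gt hlt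
end

section
/- (Einstein synchronization) Let n ≥ 2, let v ∈ ℝⁿ be timelike (η(v,v) > 0), let p, q ∈ ℝⁿ, and let s₊, s₋ > 0 be such that the points q₊ := q + s₊•v and q₋ := q − s₋•v both lie on the light cone of p, i.e. η(q₊ − p, q₊ − p) = 0 and η(q₋ − p, q₋ − p) = 0. Then: (i) η(q − p, q − p) = − s₊·s₋·η(v,v), i.e. the squared Minkowski norm of q − p equals the product of the Minkowski lengths of the segments q₊ − q and q − q₋; and (ii) s₊ = s₋ if and only if η(q − p, v) = 0, i.e. q is the midpoint of the segment from q₋ to q₊ exactly when q − p is Minkowski-orthogonal to v. -/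
/-!
Write `u = q - p`. Expanding the two light-cone conditions by bilinearity gives two linear
equations in `η(u,u)` and `η(u,v)`:
`η(u,u) + 2 s η(u,v) + s² η(v,v) = 0` and `η(u,u) - 2 t η(u,v) + t² η(v,v) = 0`.
Since `s + t ≠ 0` they determine `η(u,u) = -s t η(v,v)` and `2 η(u,v) = (t - s) η(v,v)`;
as `η(v,v) ≠ 0`, the latter vanishes exactly when `s = t`.
-/

namespace LinearMap.BilinForm.IsSymm

variable {K M : Type*} [Field K] [AddCommGroup M] [Module K M] {B : LinearMap.BilinForm K M}

theorem apply_add_smul_add_smul (hB : B.IsSymm) (u v : M) (t : K) :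
    B (u + t • v) (u + t • v) = B u u + 2 * t * B u v + t ^ 2 * B v v := by
  simp only [map_add, map_smul, LinearMap.add_apply, LinearMap.smul_apply, smul_eq_mul,
    hB.eq v u]
  ring

theorem apply_sub_smul_sub_smul (hB : B.IsSymm) (u v : M) (t : K) :
    B (u - t • v) (u - t • v) = B u u - 2 * t * B u v + t ^ 2 * B v v := by
  rw [sub_eq_add_neg, ← neg_smul, hB.apply_add_smul_add_smul]
  ring

variable {u v : M} {s t : K}

theorem apply_self_eq_of_apply_add_smul_eq_zero (hB : B.IsSymm) (hst : s + t ≠ 0)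
    (hs : B (u + s • v) (u + s • v) = 0) (ht : B (u - t • v) (u - t • v) = 0) :
    B u u = -(s * t * B v v) := by
  rw [hB.apply_add_smul_add_smul] at hs
  rw [hB.apply_sub_smul_sub_smul] at ht
  apply mul_left_cancel₀ hst
  linear_combination t * hs + s * ht

theorem two_mul_apply_eq_of_apply_add_smul_eq_zero (hB : B.IsSymm) (hst : s + t ≠ 0)
    (hs : B (u + s • v) (u + s • v) = 0) (ht : B (u - t • v) (u - t • v) = 0) :
    2 * B u v = (t - s) * B v v := by
  rw [hB.apply_add_smul_add_smul] at hs
  rw [hB.apply_sub_smul_sub_smul] at ht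
  apply mul_left_cancel₀ hst
  linear_combination hs - ht

end LinearMap.BilinForm.IsSymm

section Minkowski

variable {n : ℕ} [NeZero n]

def etaBilin : LinearMap.BilinForm ℝ (Fin n → ℝ) :=
  LinearMap.mk₂ ℝ eta
    (fun a b w => by simp only [eta, Pi.add_apply, add_mul, Finset.sum_add_distrib]; ring)
    (fun s a w => by
      simp only [eta, Pi.smul_apply, smul_eq_mul, mul_sub, Finset.mul_sum, mul_assoc])
    (fun w a b => by simp only [eta, Pi.add_apply, mul_add, Finset.sum_add_distrib]; ring)
    (fun s w a => by
      simp only [eta, Pi.smul_apply, smul_eq_mul, mul_sub, Finset.mul_sum, mul_left_comm])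

@[simp]
theorem etaBilin_apply (v w : Fin n → ℝ) : etaBilin v w = eta v w := rfl

theorem etaBilin_isSymm : (etaBilin : LinearMap.BilinForm ℝ (Fin n → ℝ)).IsSymm :=
  ⟨fun v w => by simp only [etaBilin_apply, eta, mul_comm]⟩

end Minkowski

theorem einstein_synchronization_general {n : ℕ} [NeZero n]
    (v p q : Fin n → ℝ) (hv : 0 < eta v v)
    (sp sm : ℝ) (hsp : 0 < sp) (hsm : 0 < sm)
    (hplus : eta (q + sp • v - p) (q + sp • v - p) = 0)
    (hminus : eta (q - sm • v - p) (q - sm • v - p) = 0) :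
    eta (q - p) (q - p) = -(sp * sm * eta v v) ∧
    (sp = sm ↔ eta (q - p) v = 0) := by
  have hsum : sp + sm ≠ 0 := by positivity
  rw [add_sub_right_comm, ← etaBilin_apply] at hplus
  rw [sub_right_comm, ← etaBilin_apply] at hminus
  have hself := etaBilin_isSymm.apply_self_eq_of_apply_add_smul_eq_zero hsum hplus hminus
  have hortho := etaBilin_isSymm.two_mul_apply_eq_of_apply_add_smul_eq_zero hsum hplus hminus
  simp only [etaBilin_apply] at hself hortho
  refine ⟨hself, ?_⟩
  rw [← mul_eq_zero_iff_left (two_ne_zero (α := ℝ)), hortho, mul_eq_zero_iff_right hv.ne',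
    sub_eq_zero, eq_comm]

/-- **Einstein synchronization**: if `q + sp • v` and `q - sm • v` lie on the
light cone of `p` (with `sp, sm > 0` and `v` timelike), then
`η(q−p, q−p) = −sp·sm·η(v,v)`, and `sp = sm` iff `q − p` is
Minkowski-orthogonal to `v`. -/
theorem einstein_synchronization {n : ℕ} [NeZero n] (hn : 2 ≤ n)
    (v p q : Fin n → ℝ) (hv : 0 < eta v v)
    (sp sm : ℝ) (hsp : 0 < sp) (hsm : 0 < sm)
    (hplus : eta (q + sp • v - p) (q + sp • v - p) = 0)
    (hminus : eta (q - sm • v - p) (q - sm • v - p) = 0) :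
    eta (q - p) (q - p) = -(sp * sm * eta v v) ∧
    (sp = sm ↔ eta (q - p) v = 0) :=
  einstein_synchronization_general v p q hv sp sm hsp hsm hplus hminus
end

section
/- Let G be a group acting transitively on a set S (MulAction with IsPretransitive), and let p ∈ S. Then S admits a G-invariant equivalence relation other than the two trivial ones (the equality relation and the all relation) if and only if the stabilizer subgroup Stab(p) is not maximal in G, i.e. there exists a subgroup H of G with Stab(p) < H and H ≠ G (strict inclusions). Here an equivalence relation r on S is G-invariant if r x y implies r (g•x) (g•y) for all g ∈ G. -/
/-!
A `G`-invariant equivalence relation is determined by the class of a single point, and that class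
is a block; conversely the translates of a block through `p` form an invariant partition. So
nontrivial invariant equivalence relations exist iff the action is not preprimitive, which for a
transitive action is the failure of maximality of `Stab(p)` (`isCoatom_stabilizer_iff_preprimitive`).
-/

open Pointwise

theorem exists_lt_ne_top_iff_not_isCoatom {α : Type*} [PartialOrder α] [OrderTop α] {a : α}
    (ha : a ≠ ⊤) : (∃ b, a < b ∧ b ≠ ⊤) ↔ ¬IsCoatom a := by
  simp [IsCoatom, ha]

theorem Setoid.eq_top_iff_setOf_rel_eq_univ {α : Type*} {r : Setoid α} (a : α) :
    r = ⊤ ↔ {x | r x a} = Set.univ := by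
  refine ⟨fun h => by subst h; exact Set.eq_univ_of_forall fun _ => trivial, fun h => ?_⟩
  have hrel : ∀ x, r x a := fun x => Set.eq_univ_iff_forall.mp h x
  exact Setoid.eq_top_iff.mpr fun x y => r.trans (hrel x) (r.symm (hrel y))

namespace MulAction

variable {G S : Type*} [Group G] [MulAction G S]

variable (G) in
def IsInvariantSetoid (r : Setoid S) : Prop :=
  ∀ (g : G) (x y : S), r x y → r (g • x) (g • y)

section InvariantSetoid

variable {r : Setoid S}

theorem IsInvariantSetoid.smul_setOf_rel (hr : IsInvariantSetoid G r) (g : G) (a : S) :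
    g • {x | r x a} = {x | r x (g • a)} := by
  ext y
  rw [Set.mem_smul_set_iff_inv_smul_mem]
  refine ⟨fun h => by simpa using hr g _ _ h, fun h => by simpa using hr g⁻¹ _ _ h⟩

theorem IsInvariantSetoid.isBlock_setOf_rel (hr : IsInvariantSetoid G r) (a : S) :
    IsBlock G {x | r x a} := by
  refine isBlock_iff_smul_eq_of_nonempty.mpr fun g ⟨z, hzg, hz⟩ => ?_
  rw [hr.smul_setOf_rel] at hzg ⊢
  have hga : r a (g • a) := r.trans (r.symm hz) hzg
  ext x
  exact ⟨fun hx => r.trans hx (r.symm hga), fun hx => r.trans hx hga⟩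

theorem IsInvariantSetoid.eq_bot_iff [IsPretransitive G S] (hr : IsInvariantSetoid G r) (a : S) :
    r = ⊥ ↔ {x | r x a}.Subsingleton := by
  refine ⟨fun h x hx y hy => ?_, fun h => ?_⟩
  · subst h
    exact hx.trans hy.symm
  · ext x y
    refine ⟨fun hxy => ?_, fun hxy => hxy ▸ r.refl x⟩
    obtain ⟨g, rfl⟩ := exists_smul_eq G a y
    have := hr g⁻¹ _ _ hxy
    rw [inv_smul_smul] at this
    exact (smul_left_cancel_iff g⁻¹).mp (h this (by simp))

theorem IsInvariantSetoid.isTrivialBlock_setOf_rel_iff [IsPretransitive G S]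
    (hr : IsInvariantSetoid G r) (a : S) :
    IsTrivialBlock {x | r x a} ↔ r = ⊥ ∨ r = ⊤ := by
  rw [hr.eq_bot_iff a, Setoid.eq_top_iff_setOf_rel_eq_univ a, IsTrivialBlock]

end InvariantSetoid

namespace IsBlock

variable [IsPretransitive G S] {B : Set S} (hB : IsBlock G B) (hBne : B.Nonempty)

def setoid : Setoid S :=
  Setoid.mkClasses _ (hB.isBlockSystem hBne).1.2

theorem isInvariantSetoid_setoid : IsInvariantSetoid G (hB.setoid hBne) := by
  rintro g x y hxy _ ⟨k, rfl⟩ hx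
  have := hxy ((g⁻¹ * k) • B) ⟨g⁻¹ * k, rfl⟩ (by rwa [mul_smul, Set.mem_inv_smul_set_iff])
  rwa [mul_smul, Set.mem_inv_smul_set_iff] at this

theorem setOf_setoid_rel {a : S} (ha : a ∈ B) : {x | hB.setoid hBne x a} = B :=
  (Setoid.eq_eqv_class_of_mem _ (Set.mem_range.mpr ⟨1, one_smul G B⟩) ha).symm

end IsBlock

theorem isPreprimitive_iff_forall_isInvariantSetoid [IsPretransitive G S] :
    IsPreprimitive G S ↔ ∀ r : Setoid S, IsInvariantSetoid G r → r = ⊥ ∨ r = ⊤ := by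
  refine ⟨fun _ r hr => ?_, fun h => { isTrivialBlock_of_isBlock := fun {B} hB => ?_ }⟩
  · rcases isEmpty_or_nonempty S with hS | ⟨⟨a⟩⟩
    · exact Or.inl (Setoid.ext fun x => isEmptyElim x)
    · exact (hr.isTrivialBlock_setOf_rel_iff a).mp (hr.isBlock_setOf_rel a).subsingleton_or_eq_univ
  · obtain rfl | ⟨a, ha⟩ := B.eq_empty_or_nonempty
    · exact Or.inl Set.subsingleton_empty
    · have hBne : B.Nonempty := ⟨a, ha⟩
      rw [← hB.setOf_setoid_rel hBne ha]
      exact ((hB.isInvariantSetoid_setoid hBne).isTrivialBlock_setOf_rel_iff a).mpr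
        (h _ (hB.isInvariantSetoid_setoid hBne))

end MulAction

open MulAction

/-- For a transitive group action of `G` on `S`, there exists a `G`-invariant
equivalence relation on `S` other than the two trivial ones iff the stabilizer
of a point is not a maximal subgroup of `G`. -/
theorem invariant_equivalence_iff_stabilizer_not_maximal
    {G : Type*} [Group G] {S : Type*} [MulAction G S]
    [MulAction.IsPretransitive G S] (p : S) :
    (∃ r : Setoid S, (∀ (g : G) (x y : S), r.r x y → r.r (g • x) (g • y)) ∧
      r ≠ ⊥ ∧ r ≠ ⊤) ↔
    ∃ H : Subgroup G, MulAction.stabilizer G p < H ∧ H ≠ ⊤ := by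
  rcases subsingleton_or_nontrivial S with hS | hS
  · have hr : ∀ r : Setoid S, r = ⊥ := fun r =>
      Setoid.ext fun x y => ⟨fun _ => Subsingleton.elim x y, fun h => h ▸ r.refl x⟩
    have hstab : stabilizer G p = ⊤ :=
      (Subgroup.eq_top_iff' _).mpr fun g => Subsingleton.elim (g • p) p
    simp [hr, hstab]
  · have hstab : stabilizer G p ≠ ⊤ := by
      obtain ⟨q, hq⟩ := exists_ne p
      obtain ⟨g, rfl⟩ := exists_smul_eq G p q
      exact fun h => hq (h ▸ Subgroup.mem_top g : g ∈ stabilizer G p)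
    rw [exists_lt_ne_top_iff_not_isCoatom hstab, isCoatom_stabilizer_iff_preprimitive,
      isPreprimitive_iff_forall_isInvariantSetoid]
    simp only [IsInvariantSetoid, not_forall, not_or, exists_prop]
end

section
/- Let V be a real vector space and let B : V × V → ℝ be a symmetric bilinear form that is non-degenerate (if B(v, w) = 0 for all w then v = 0). If φ : V → V is a surjective map satisfying B(φ(u), φ(v)) = B(u, v) for all u, v ∈ V (a generalized orthogonal transformation), then φ is linear: φ(a•u + v) = a•φ(u) + φ(v) for all a ∈ ℝ and u, v ∈ V. -/
/-- A surjective map preserving a non-degenerate symmetric bilinear form on a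
real vector space is automatically linear. -/
theorem generalized_orthogonal_is_linear
    {V : Type*} [AddCommGroup V] [Module ℝ V]
    (B : LinearMap.BilinForm ℝ V)
    (hsymm : ∀ u v : V, B u v = B v u)
    (hnd : ∀ v : V, (∀ w : V, B v w = 0) → v = 0)
    (φ : V → V) (hsurj : Function.Surjective φ)
    (hiso : ∀ u v : V, B (φ u) (φ v) = B u v) :
    ∀ (a : ℝ) (u v : V), φ (a • u + v) = a • φ u + φ v := by
  intro a u v
  have key : φ (a • u + v) - (a • φ u + φ v) = 0 := by
    apply hnd
    intro w
    obtain ⟨w', rfl⟩ := hsurj w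
    have h1 : B (φ (a • u + v)) (φ w') = a * B u w' + B v w' := by
      rw [hiso]; simp
    have h2 : B (a • φ u + φ v) (φ w') = a * B u w' + B v w' := by
      simp [hiso]
    rw [map_sub, LinearMap.sub_apply, h1, h2, sub_self]
  have := sub_eq_zero.mp key
  exact this
end

section
/- (Cartan–Dieudonné, weak form) Let V be a real vector space of finite dimension n ≥ 1 and let B be a symmetric non-degenerate bilinear form on V. For v ∈ V with B(v,v) ≠ 0 define the reflection ρ_v : V → V by ρ_v(x) := x − (2 B(v,x)/B(v,v))•v. Then every linear bijection φ : V → V satisfying B(φ(u), φ(w)) = B(u, w) for all u, w (a generalized orthogonal transformation) is a composition of at most 2n − 1 such reflections: there exists a list v₁, …, v_k of vectors with B(vᵢ,vᵢ) ≠ 0 and k ≤ 2n − 1 such that φ = ρ_{v₁} ∘ ⋯ ∘ ρ_{v_k}. -/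
/-!
Induct on the dimension. Pick `v` with `B v v ≠ 0`. Since
`B (f v - v) (f v - v) + B (f v + v) (f v + v) = 4 B v v`, one of `f v ∓ v` is anisotropic, and
the reflection in it (followed by `ρ_v` in the `+` case) turns `f` into an isometry fixing `v`,
hence preserving `v^⊥`, where the induction hypothesis applies. The `+` case costs two
reflections, but it cannot occur in dimension one; this gives the bound `2n - 1`.
-/

open Module

namespace LinearMap.BilinForm

variable {K V : Type*} [Field K] [AddCommGroup V] [Module K V] {B : LinearMap.BilinForm K V}

variable (B) in
noncomputable def reflection (v : V) : End K V :=
  preReflection v ((2 / B v v) • B v)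

variable (B) in
lemma reflection_apply (v x : V) : B.reflection v x = x - (2 * B v x / B v v) • v := by
  rw [reflection, preReflection_apply, LinearMap.smul_apply, smul_eq_mul, div_mul_eq_mul_div]

lemma reflection_apply_of_isOrtho {v x : V} (h : B v x = 0) : B.reflection v x = x := by
  simp [reflection_apply, h]

lemma two_div_smul_apply_self {v : V} (hv : B v v ≠ 0) : ((2 / B v v) • B v) v = 2 := by
  simp [hv]

lemma reflection_apply_self {v : V} (hv : B v v ≠ 0) : B.reflection v v = -v :=
  preReflection_apply_self (two_div_smul_apply_self hv)

lemma reflection_mul_self {v : V} (hv : B v v ≠ 0) : B.reflection v * B.reflection v = 1 :=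
  LinearMap.ext (involutive_preReflection (two_div_smul_apply_self hv))

lemma isOrthogonal_reflection (hB : B.IsSymm) {v : V} (hv : B v v ≠ 0) :
    B.IsOrthogonal (B.reflection v) := by
  intro x y
  simp only [reflection_apply, map_sub, map_smul, LinearMap.sub_apply, LinearMap.smul_apply,
    smul_eq_mul, hB.eq x v]
  field_simp
  ring

lemma _root_.LinearMap.IsOrthogonal.mul {f g : End K V} (hf : B.IsOrthogonal f)
    (hg : B.IsOrthogonal g) : B.IsOrthogonal (f * g) :=
  fun x y => (hf (g x) (g y)).trans (hg x y)

lemma reflection_sub_apply (hB : B.IsSymm) {a b : V} (h : B a a = B b b)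
    (hab : B (a - b) (a - b) ≠ 0) : B.reflection (a - b) a = b := by
  have : 2 * B (a - b) a = B (a - b) (a - b) := by
    simp only [map_sub, LinearMap.sub_apply] at hab ⊢
    rw [hB.eq b a, h]
    ring
  rw [reflection_apply, this, div_self hab, one_smul, sub_sub_cancel]

lemma reflection_add_apply (hB : B.IsSymm) {a b : V} (h : B a a = B b b)
    (hab : B (a + b) (a + b) ≠ 0) : B.reflection (a + b) a = -b := by
  rw [← sub_neg_eq_add] at hab ⊢
  exact reflection_sub_apply hB (by simpa using h) hab

lemma apply_add_self_ne_zero [NeZero (2 : K)] {a b : V} (h : B a a = B b b) (hb : B b b ≠ 0)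
    (hab : B (a - b) (a - b) = 0) : B (a + b) (a + b) ≠ 0 := by
  have : B (a + b) (a + b) = 2 * 2 * B b b := by
    simp only [map_sub, map_add, LinearMap.sub_apply, LinearMap.add_apply] at hab ⊢
    linear_combination 2 * h - hab
  rw [this]
  exact mul_ne_zero (mul_ne_zero two_ne_zero two_ne_zero) hb

lemma restrict_reflection_apply (W : Submodule K V) (u w : W) :
    ((B.restrict W).reflection u w : V) = B.reflection u w := by
  simp [reflection_apply]

variable (B) in
noncomputable def reflectionProd (l : List V) : End K V :=
  (l.map B.reflection).prod

@[simp]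
lemma reflectionProd_cons (v : V) (l : List V) :
    B.reflectionProd (v :: l) = B.reflection v * B.reflectionProd l := rfl

lemma coe_reflectionProd (l : List V) :
    ⇑(B.reflectionProd l) =
      -- plain `id` would be `LinearMap.id` in this namespace
      l.foldr (fun v f => (fun x => x - (2 * B v x / B v v) • v) ∘ f) _root_.id := by
  induction l with
  | nil => rfl
  | cons v l ih =>
    ext x
    simp [← ih, reflection_apply]

lemma reflectionProd_apply_of_isOrtho {l : List V} {x : V} (h : ∀ u ∈ l, B u x = 0) :
    B.reflectionProd l x = x := by
  induction l with
  | nil => rfl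
  | cons v l ih =>
    simp only [List.forall_mem_cons] at h
    rw [reflectionProd_cons, Module.End.mul_apply, ih h.2, reflection_apply_of_isOrtho h.1]

lemma restrict_reflectionProd_apply (W : Submodule K V) (l : List W) (w : W) :
    ((B.restrict W).reflectionProd l w : V) = B.reflectionProd (l.map (↑)) w := by
  induction l with
  | nil => rfl
  | cons u l ih =>
    rw [reflectionProd_cons, Module.End.mul_apply, restrict_reflection_apply, ih]
    rfl

variable (B) in
def IsReflectionProd (k : ℕ) (f : End K V) : Prop :=
  ∃ l : List V, (∀ v ∈ l, B v v ≠ 0) ∧ l.length ≤ k ∧ B.reflectionProd l = f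

lemma IsReflectionProd.mono {k m : ℕ} {f : End K V} (h : B.IsReflectionProd k f) (hkm : k ≤ m) :
    B.IsReflectionProd m f :=
  let ⟨l, hl, hlen, hf⟩ := h
  ⟨l, hl, hlen.trans hkm, hf⟩

lemma IsReflectionProd.of_reflection_mul {k : ℕ} {f : End K V} {v : V} (hv : B v v ≠ 0)
    (h : B.IsReflectionProd k (B.reflection v * f)) : B.IsReflectionProd (k + 1) f := by
  obtain ⟨l, hl, hlen, hf⟩ := h
  refine ⟨v :: l, List.forall_mem_cons.2 ⟨hv, hl⟩, by simpa using hlen, ?_⟩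
  rw [reflectionProd_cons, hf, ← mul_assoc, reflection_mul_self hv, one_mul]

lemma IsReflectionProd.of_restrict_orthogonal (hB : B.IsSymm) {k : ℕ} {v : V} (hv : B v v ≠ 0)
    {f : End K V} (hfv : f v = v)
    (hW : ∀ w ∈ B.orthogonal (K ∙ v), f w ∈ B.orthogonal (K ∙ v))
    (h : (B.restrict (B.orthogonal (K ∙ v))).IsReflectionProd k (f.restrict hW)) :
    B.IsReflectionProd k f := by
  obtain ⟨l, hl, hlen, hf⟩ := h
  refine ⟨l.map (↑), by simpa using hl, by simpa using hlen, ?_⟩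
  refine LinearMap.ext_on_codisjoint (isCompl_span_singleton_orthogonal hv).codisjoint ?_ ?_
  · rintro _ hx
    obtain ⟨c, rfl⟩ := Submodule.mem_span_singleton.1 hx
    rw [map_smul, map_smul, hfv, reflectionProd_apply_of_isOrtho]
    simp only [List.mem_map]
    rintro _ ⟨u, -, rfl⟩
    exact hB.eq u v ▸ u.2 v (Submodule.mem_span_singleton_self v)
  · intro w hw
    exact (restrict_reflectionProd_apply _ l ⟨w, hw⟩).symm.trans
      (congrArg (fun g => (g ⟨w, hw⟩ : V)) hf)

lemma finrank_ne_one_of_apply_self_eq_zero {v u : V} (hv : B v v ≠ 0) (hu : u ≠ 0)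
    (huu : B u u = 0) : finrank K V ≠ 1 := by
  intro h
  obtain ⟨c, rfl⟩ := (finrank_eq_one_iff_of_nonzero' v (ne_zero_of_not_isOrtho_self v hv)).1 h u
  simp_all

lemma exists_apply_self_ne_zero [NeZero (2 : K)] [Nontrivial V] (hB : B.IsSymm)
    (hnd : B.Nondegenerate) : ∃ v, B v v ≠ 0 := by
  have : Invertible (2 : K) := invertibleOfNonzero two_ne_zero
  refine exists_bilinForm_self_ne_zero (fun h => ?_) (isSymm_iff.1 hB)
  obtain ⟨x, hx⟩ := exists_ne (0 : V)
  exact hx (hnd.1 x fun y => by simp [h])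

lemma mapsTo_orthogonal_span_singleton {f : End K V} (hf : B.IsOrthogonal f) {v : V}
    (hfv : f v = v) : ∀ w ∈ B.orthogonal (K ∙ v), f w ∈ B.orthogonal (K ∙ v) := by
  intro w hw x hx
  obtain ⟨c, rfl⟩ := Submodule.mem_span_singleton.1 hx
  rw [← hfv, ← map_smul, hf]
  exact hw _ hx

theorem isReflectionProd_of_isOrthogonal [FiniteDimensional K V] [NeZero (2 : K)]
    (hB : B.IsSymm) (hnd : B.Nondegenerate) {f : End K V} (hf : B.IsOrthogonal f) :
    B.IsReflectionProd (2 * finrank K V - 1) f := by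
  induction hn : finrank K V generalizing V with
  | zero =>
    have : Subsingleton V := finrank_zero_iff.1 hn
    exact ⟨[], by simp, by simp, Subsingleton.elim _ _⟩
  | succ k ih =>
    have : Nontrivial V := nontrivial_of_finrank_eq_succ hn
    obtain ⟨v, hv⟩ := exists_apply_self_ne_zero hB hnd
    have hW : finrank K (B.orthogonal (K ∙ v)) = k := by
      rw [finrank_orthogonal hnd, hn, finrank_span_singleton (ne_zero_of_not_isOrtho_self v hv)]
      rfl
    have of_apply_eq_self : ∀ g : End K V, B.IsOrthogonal g → g v = v →
        B.IsReflectionProd (2 * k - 1) g := fun g hg hgv =>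
      .of_restrict_orthogonal hB hv hgv (mapsTo_orthogonal_span_singleton hg hgv)
        (ih (hB.restrict _) (restrict_nondegenerate_orthogonal_spanSingleton B hnd hB.isRefl hv)
          (fun x y => hg x y) hW)
    have hnorm : B (f v) (f v) = B v v := hf v v
    by_cases hfix : f v = v
    · exact (of_apply_eq_self f hf hfix).mono (by omega)
    rcases ne_or_eq (B (f v - v) (f v - v)) 0 with hsub | hsub
    · have hg : (B.reflection (f v - v) * f) v = v := reflection_sub_apply hB hnorm hsub
      exact ((of_apply_eq_self _ (IsOrthogonal.mul (isOrthogonal_reflection hB hsub) hf)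
        hg).of_reflection_mul hsub).mono (by omega)
    · have hadd := apply_add_self_ne_zero hnorm hv hsub
      -- in dimension one the nonzero vector `f v - v` could not be isotropic
      have hk : k ≠ 0 := by
        rintro rfl
        exact finrank_ne_one_of_apply_self_eq_zero hv (sub_ne_zero.2 hfix) hsub hn
      have hg : (B.reflection v * (B.reflection (f v + v) * f)) v = v := by
        rw [Module.End.mul_apply, Module.End.mul_apply, reflection_add_apply hB hnorm hadd,
          map_neg, reflection_apply_self hv, neg_neg]
      have hg_orth := IsOrthogonal.mul (isOrthogonal_reflection hB hv)
        (IsOrthogonal.mul (isOrthogonal_reflection hB hadd) hf)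
      exact (((of_apply_eq_self _ hg_orth hg).of_reflection_mul hv).of_reflection_mul
        hadd).mono (by omega)

end LinearMap.BilinForm

theorem cartan_dieudonne_weak_general
    {V : Type*} [AddCommGroup V] [Module ℝ V] [FiniteDimensional ℝ V]
    (n : ℕ) (hdim : Module.finrank ℝ V = n)
    (B : LinearMap.BilinForm ℝ V)
    (hsymm : ∀ u v : V, B u v = B v u)
    (hnd : ∀ v : V, (∀ w : V, B v w = 0) → v = 0)
    (φ : V ≃ₗ[ℝ] V) (hiso : ∀ u w : V, B (φ u) (φ w) = B u w) :
    ∃ l : List V, (∀ v ∈ l, B v v ≠ 0) ∧ l.length ≤ 2 * n - 1 ∧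
      ⇑φ = l.foldr
        (fun v f => (fun x => x - (2 * B v x / B v v) • v) ∘ f) id := by
  have hB : B.IsSymm := ⟨hsymm⟩
  obtain ⟨l, hl, hlen, hφ⟩ := LinearMap.BilinForm.isReflectionProd_of_isOrthogonal hB
    (hB.isRefl.nondegenerate_iff_separatingLeft.2 hnd) (f := φ.toLinearMap) hiso
  exact ⟨l, hl, hdim ▸ hlen, by rw [← LinearMap.BilinForm.coe_reflectionProd, hφ]; rfl⟩

/-- **Cartan–Dieudonné theorem** (weak form): every linear bijection of an
`n`-dimensional real vector space (`n ≥ 1`) preserving a non-degenerate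
symmetric bilinear form `B` is the composition of at most `2n − 1` reflections
`ρ_v : x ↦ x − (2 B(v,x)/B(v,v)) • v` at non-degenerate hyperplanes. -/
theorem cartan_dieudonne_weak
    {V : Type*} [AddCommGroup V] [Module ℝ V] [FiniteDimensional ℝ V]
    (n : ℕ) (hn : 1 ≤ n) (hdim : Module.finrank ℝ V = n)
    (B : LinearMap.BilinForm ℝ V)
    (hsymm : ∀ u v : V, B u v = B v u)
    (hnd : ∀ v : V, (∀ w : V, B v w = 0) → v = 0)
    (φ : V ≃ₗ[ℝ] V) (hiso : ∀ u w : V, B (φ u) (φ w) = B u w) :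
    ∃ l : List V, (∀ v ∈ l, B v v ≠ 0) ∧ l.length ≤ 2 * n - 1 ∧
      ⇑φ = l.foldr
        (fun v f => (fun x => x - (2 * B v x / B v v) • v) ∘ f) id :=
  cartan_dieudonne_weak_general n hdim B hsymm hnd φ hiso
end
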